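/- Under the iConEF-v2 algorithm (p_t^i = η g_t^i + ẽ_t^i + q_t^i; Δ_t^i = Q(p_t^i); x_{t+1} = x_t − (1/N)Σ_i Δ_t^i; ẽ_{t+1}^i = Q(p_t^i − Δ_t^i); q_{t+1}^i = C(p_t^i − Δ_t^i − ẽ_{t+1}^i); ẽ_0^i = q_0^i = 0), with stochastic gradients satisfying E[g_t^i | x_t] = ∇f(x_t), E[||g_t^i − ∇f(x_t)||² | x_t] ≤ σ², E[||∇f(x_t)||²] ≤ G², error compressor C unbiased with E[||C(x) − x||² | x] ≤ θ||x||², and gradient compressor Q satisfying E[||Q(x) − x||² | x] ≤ δ||x||²: if δ = c/((1+λ)(1+√θ)²) for some c ∈ (0,1), λ > 0, then writing e_{t+1}^i = ẽ_{t+1}^i + q_{t+1}^i, it holds for every t ≥ 0 that E[|| (1/N) Σ_{i=1}^N e_{t+1}^i ||²] ≤ (c/((1−c)λ)) · η² (σ² + G²). -/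

import Mathlib

open MeasureTheory ProbabilityTheory
open scoped ENNReal RealInnerProductSpace

/-!
Write `e = ẽ + q` for the accumulated error of one worker. Given the past, the new error is
`Q r + C (r - Q r)` with `r = p - Q p`; it differs from `r` by the error of `C`, so the triangle
inequality and Minkowski's inequality in `L²` over the fresh compressor seeds give
`E‖e⁺‖² ≤ (1 + √θ)² δ ‖p‖² = c / (1 + λ) ‖p‖²`. Splitting `p = η g + e` by the Peter–Paul
inequality and using `E‖g‖² = E‖g - ∇f‖² + ‖∇f‖²` for the unbiased oracle yields
`E‖e_{t+1}‖² ≤ c E‖e_t‖² + (c / λ) η² (σ² + G²)`; the conditional bounds integrate because the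
fresh seeds are independent of the state, which depends only on earlier seeds. Started from
`e_0 = 0`, this recursion stays below its fixed point `c η² (σ² + G²) / ((1 - c) λ)`, and
averaging over the workers does not increase the mean square.
-/

section SecondMoments

variable {α : Type*} [MeasurableSpace α] {ν : Measure α} [IsProbabilityMeasure ν]
  {F : Type*} [NormedAddCommGroup F] [InnerProductSpace ℝ F] [CompleteSpace F]

theorem lintegral_const_add_sq_le {r : α → ℝ≥0∞} (hr : AEMeasurable r ν) (a : ℝ≥0∞)
    {s : ℝ≥0∞} (hrs : ∫⁻ x, r x ^ 2 ∂ν ≤ s ^ 2) :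
    ∫⁻ x, (a + r x) ^ 2 ∂ν ≤ (a + s) ^ 2 := by
  have hsq : ∀ X : ℝ≥0∞, (X ^ (1 / 2 : ℝ)) ^ 2 = X := fun X => by
    rw [← ENNReal.rpow_natCast, ← ENNReal.rpow_mul]; norm_num
  have hsqrt : ∀ X : ℝ≥0∞, (X ^ 2) ^ (1 / 2 : ℝ) = X := fun X => by
    rw [← ENNReal.rpow_natCast, ← ENNReal.rpow_mul]; norm_num
  calc ∫⁻ x, (a + r x) ^ 2 ∂ν = ((∫⁻ x, (a + r x) ^ (2 : ℝ) ∂ν) ^ (1 / 2 : ℝ)) ^ 2 := by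
        simp only [hsq, ENNReal.rpow_two]
    _ ≤ ((∫⁻ _, a ^ (2 : ℝ) ∂ν) ^ (1 / 2 : ℝ)
          + (∫⁻ x, r x ^ (2 : ℝ) ∂ν) ^ (1 / 2 : ℝ)) ^ 2 := by
        gcongr
        exact ENNReal.lintegral_Lp_add_le aemeasurable_const hr one_le_two
    _ ≤ (a + s) ^ 2 := by
        simp only [ENNReal.rpow_two, lintegral_const, measure_univ, mul_one, hsqrt]
        gcongr
        simpa only [hsqrt] using ENNReal.rpow_le_rpow hrs (by norm_num : (0 : ℝ) ≤ 1 / 2)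

theorem enorm_sq_eq_ofReal {E : Type*} [SeminormedAddGroup E] (z : E) :
    ‖z‖ₑ ^ 2 = ENNReal.ofReal (‖z‖ ^ 2) := by
  rw [ENNReal.ofReal_pow (norm_nonneg z), ofReal_norm]

theorem ofReal_mul_norm_sq {E : Type*} [SeminormedAddGroup E] {θ : ℝ} (hθ : 0 ≤ θ) (z : E) :
    ENNReal.ofReal (θ * ‖z‖ ^ 2) = (ENNReal.ofReal √θ * ‖z‖ₑ) ^ 2 := by
  rw [mul_pow, enorm_sq_eq_ofReal, ← ENNReal.ofReal_pow (Real.sqrt_nonneg θ), Real.sq_sqrt hθ,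
    ENNReal.ofReal_mul hθ]

theorem norm_add_sq_le_peter_paul {E : Type*} [SeminormedAddGroup E] {lam : ℝ} (hlam : 0 < lam)
    (u w : E) : ‖u + w‖ ^ 2 ≤ (1 + lam⁻¹) * ‖u‖ ^ 2 + (1 + lam) * ‖w‖ ^ 2 := by
  have hcross : 2 * ‖u‖ * ‖w‖ ≤ lam⁻¹ * ‖u‖ ^ 2 + lam * ‖w‖ ^ 2 := by
    have := sq_nonneg (‖u‖ - lam * ‖w‖)
    field_simp
    nlinarith
  nlinarith [norm_add_le u w, norm_nonneg (u + w)]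

theorem lintegral_enorm_sq_eq_add_of_integral_eq {X : α → F} (hX : AEStronglyMeasurable X ν)
    {m : F} (hm : ∫ x, X x ∂ν = m) (hfin : ∫⁻ x, ‖X x - m‖ₑ ^ 2 ∂ν ≠ ∞) :
    ∫⁻ x, ‖X x‖ₑ ^ 2 ∂ν = ∫⁻ x, ‖X x - m‖ₑ ^ 2 ∂ν + ‖m‖ₑ ^ 2 := by
  have hY : AEStronglyMeasurable (fun x => X x - m) ν := hX.sub aestronglyMeasurable_const
  have hY2 : Integrable (fun x => ‖X x - m‖ ^ 2) ν :=
    ⟨hY.norm.pow 2, by simpa [HasFiniteIntegral, enorm_pow] using hfin.lt_top⟩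
  have hYint : Integrable (fun x => X x - m) ν :=
    ((memLp_two_iff_integrable_sq_norm hY).2 hY2).integrable one_le_two
  have hcrossInt : Integrable (fun x => 2 * ⟪m, X x - m⟫) ν :=
    (hYint.const_inner m).const_mul 2
  have hcross : ∫ x, ⟪m, X x - m⟫ ∂ν = 0 := by
    have hXint : Integrable X ν :=
      (hYint.add (integrable_const m)).congr (.of_forall fun x => sub_add_cancel (X x) m)
    rw [integral_inner hYint, integral_sub hXint (integrable_const m), hm]
    simp
  have hpyth : ∀ x, ‖X x‖ ^ 2 = ‖X x - m‖ ^ 2 + 2 * ⟪m, X x - m⟫ + ‖m‖ ^ 2 := fun x => by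
    rw [real_inner_comm, ← norm_add_sq_real, sub_add_cancel]
  have hX2 : Integrable (fun x => ‖X x‖ ^ 2) ν := by
    simp_rw [hpyth]
    exact (hY2.add hcrossInt).add (integrable_const _)
  have hlintegral : ∀ {Z : α → F}, Integrable (fun x => ‖Z x‖ ^ 2) ν →
      ∫⁻ x, ‖Z x‖ₑ ^ 2 ∂ν = ENNReal.ofReal (∫ x, ‖Z x‖ ^ 2 ∂ν) := fun hZ => by
    rw [ofReal_integral_eq_lintegral_ofReal hZ (Filter.Eventually.of_forall fun _ => by positivity)]
    simp [ENNReal.ofReal_pow, ofReal_norm]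
  rw [hlintegral hX2, hlintegral hY2, ← ofReal_norm, ← ENNReal.ofReal_pow (norm_nonneg _),
    ← ENNReal.ofReal_add (integral_nonneg fun _ => by positivity) (by positivity)]
  congr 1
  simp_rw [hpyth]
  rw [integral_add (f := fun x => ‖X x - m‖ ^ 2 + 2 * ⟪m, X x - m⟫) (hY2.add hcrossInt)
    (integrable_const _), integral_add hY2 hcrossInt, integral_const_mul, hcross]
  simp

theorem lintegral_enorm_smul_add_sq_le {G : α → F} (hG : AEStronglyMeasurable G ν) {m : F}
    (hm : ∫ x, G x ∂ν = m) {v : ℝ≥0∞} (hv : v ≠ ∞) (hvar : ∫⁻ x, ‖G x - m‖ₑ ^ 2 ∂ν ≤ v)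
    (η : ℝ) (e : F) {lam : ℝ} (hlam : 0 < lam) :
    ∫⁻ x, ‖η • G x + e‖ₑ ^ 2 ∂ν
      ≤ ENNReal.ofReal ((1 + lam⁻¹) * η ^ 2) * (v + ‖m‖ₑ ^ 2)
        + ENNReal.ofReal (1 + lam) * ‖e‖ₑ ^ 2 := by
  have hpt : ∀ x, ‖η • G x + e‖ₑ ^ 2 ≤ ENNReal.ofReal ((1 + lam⁻¹) * η ^ 2) * ‖G x‖ₑ ^ 2
      + ENNReal.ofReal (1 + lam) * ‖e‖ₑ ^ 2 := fun x => by
    have h := norm_add_sq_le_peter_paul hlam (η • G x) e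
    rw [norm_smul, mul_pow, Real.norm_eq_abs, sq_abs, ← mul_assoc] at h
    rw [enorm_sq_eq_ofReal, enorm_sq_eq_ofReal, enorm_sq_eq_ofReal,
      ← ENNReal.ofReal_mul (by positivity), ← ENNReal.ofReal_mul (by positivity),
      ← ENNReal.ofReal_add (by positivity) (by positivity)]
    exact ENNReal.ofReal_le_ofReal h
  calc ∫⁻ x, ‖η • G x + e‖ₑ ^ 2 ∂ν
      ≤ ∫⁻ x, (ENNReal.ofReal ((1 + lam⁻¹) * η ^ 2) * ‖G x‖ₑ ^ 2
          + ENNReal.ofReal (1 + lam) * ‖e‖ₑ ^ 2) ∂ν := lintegral_mono hpt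
    _ = ENNReal.ofReal ((1 + lam⁻¹) * η ^ 2) * ∫⁻ x, ‖G x‖ₑ ^ 2 ∂ν
          + ENNReal.ofReal (1 + lam) * ‖e‖ₑ ^ 2 := by
        rw [lintegral_add_right _ measurable_const, lintegral_const_mul'' _ (hG.enorm.pow_const 2),
          lintegral_const, measure_univ, mul_one]
    _ ≤ _ := by
        rw [lintegral_enorm_sq_eq_add_of_integral_eq hG hm (ne_top_of_le_ne_top hv hvar)]
        gcongr

end SecondMoments

theorem norm_inv_card_smul_sum_sq_le {ι E : Type*} [SeminormedAddCommGroup E] [NormedSpace ℝ E]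
    (s : Finset ι) (v : ι → E) :
    ‖(s.card : ℝ)⁻¹ • ∑ i ∈ s, v i‖ ^ 2 ≤ (∑ i ∈ s, ‖v i‖ ^ 2) / s.card := by
  calc ‖(s.card : ℝ)⁻¹ • ∑ i ∈ s, v i‖ ^ 2 = (‖∑ i ∈ s, v i‖ / s.card) ^ 2 := by
        rw [norm_smul, norm_inv, RCLike.norm_natCast, inv_mul_eq_div]
    _ ≤ ((∑ i ∈ s, ‖v i‖) / s.card) ^ 2 := by gcongr; exact norm_sum_le s v
    _ ≤ (∑ i ∈ s, ‖v i‖ ^ 2) / s.card := sum_div_card_sq_le_sum_sq_div_card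

theorem lintegral_enorm_average_sq_le {α E : Type*} [MeasurableSpace α] {μ : Measure α}
    [NormedAddCommGroup E] [NormedSpace ℝ E] [MeasurableSpace E] [OpensMeasurableSpace E]
    {N : ℕ} {X : Fin N → α → E}
    (hX : ∀ i, AEMeasurable (X i) μ) {B : ℝ≥0∞} (hB : ∀ i, ∫⁻ x, ‖X i x‖ₑ ^ 2 ∂μ ≤ B) :
    ∫⁻ x, ‖(N : ℝ)⁻¹ • ∑ i, X i x‖ₑ ^ 2 ∂μ ≤ B := by
  rcases Nat.eq_zero_or_pos N with rfl | hN
  · simp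
  have hpt : ∀ x, ‖(N : ℝ)⁻¹ • ∑ i, X i x‖ₑ ^ 2 ≤ (∑ i, ‖X i x‖ₑ ^ 2) / N := fun x => by
    have h := norm_inv_card_smul_sum_sq_le Finset.univ (fun i => X i x)
    rw [Finset.card_univ, Fintype.card_fin] at h
    simp_rw [enorm_sq_eq_ofReal]
    rw [← ENNReal.ofReal_sum_of_nonneg (fun _ _ => by positivity), ← ENNReal.ofReal_natCast,
      ← ENNReal.ofReal_div_of_pos (by exact_mod_cast hN)]
    exact ENNReal.ofReal_le_ofReal h
  calc ∫⁻ x, ‖(N : ℝ)⁻¹ • ∑ i, X i x‖ₑ ^ 2 ∂μ ≤ ∫⁻ x, (∑ i, ‖X i x‖ₑ ^ 2) / N ∂μ :=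
        lintegral_mono hpt
    _ = (∑ i, ∫⁻ x, ‖X i x‖ₑ ^ 2 ∂μ) / N := by
        simp_rw [div_eq_mul_inv]
        rw [lintegral_mul_const' _ _ (ENNReal.inv_ne_top.2 (by exact_mod_cast hN.ne')),
          lintegral_finsetSum' _ fun i _ => (hX i).enorm.pow_const 2]
    _ ≤ B := by
        refine ENNReal.div_le_of_le_mul ?_
        calc ∑ i, ∫⁻ x, ‖X i x‖ₑ ^ 2 ∂μ ≤ ∑ _i : Fin N, B := Finset.sum_le_sum fun i _ => hB i
          _ = B * N := by simp [mul_comm]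

theorem lintegral_comp_eq_lintegral_lintegral_map_of_indepFun {Ω E S : Type*}
    [MeasurableSpace Ω] [MeasurableSpace E] [MeasurableSpace S] {μ : Measure Ω}
    [IsFiniteMeasure μ] {V : Ω → E} {W : Ω → S} (hV : Measurable V) (hW : Measurable W)
    (hVW : IndepFun V W μ) {Φ : E × S → ℝ≥0∞} (hΦ : Measurable Φ) :
    ∫⁻ ω, Φ (V ω, W ω) ∂μ = ∫⁻ ω, ∫⁻ w, Φ (V ω, w) ∂(μ.map W) ∂μ := by
  rw [← lintegral_map hΦ (hV.prodMk hW),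
    (indepFun_iff_map_prod_eq_prod_map_map hV.aemeasurable hW.aemeasurable).1 hVW,
    lintegral_prod _ hΦ.aemeasurable, lintegral_map hΦ.lintegral_prod_right' hV]

theorem le_ofReal_div_one_sub_of_le_mul_add {a : ℕ → ℝ≥0∞} {c b : ℝ} (hc0 : 0 ≤ c) (hc1 : c < 1)
    (hb : 0 ≤ b) (h0 : a 0 = 0) (hstep : ∀ t, a (t + 1) ≤ ENNReal.ofReal c * a t + ENNReal.ofReal b)
    (t : ℕ) : a t ≤ ENNReal.ofReal (b / (1 - c)) := by
  induction t with
  | zero => simp [h0]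
  | succ t ih =>
    have hfix : c * (b / (1 - c)) + b = b / (1 - c) := by
      field_simp [(sub_pos.2 hc1).ne']
      ring
    have hB : 0 ≤ b / (1 - c) := div_nonneg hb (sub_pos.2 hc1).le
    calc a (t + 1) ≤ ENNReal.ofReal c * ENNReal.ofReal (b / (1 - c)) + ENNReal.ofReal b :=
          (hstep t).trans (by gcongr)
      _ = ENNReal.ofReal (b / (1 - c)) := by
          rw [← ENNReal.ofReal_mul hc0, ← ENNReal.ofReal_add (mul_nonneg hc0 hB) hb, hfix]

section SeedFiltration

variable {Ω ι S : Type*} [mS : MeasurableSpace S]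

abbrev seedsBefore (seed : ℕ → ι → Ω → S) (t : ℕ) : MeasurableSpace Ω :=
  ⨆ r ∈ {r : ℕ × ι | r.1 < t}, mS.comap (seed r.1 r.2)

theorem seedsBefore_le [mΩ : MeasurableSpace Ω] {seed : ℕ → ι → Ω → S}
    (hseed : ∀ t i, Measurable (seed t i)) (t : ℕ) : seedsBefore seed t ≤ mΩ :=
  iSup₂_le fun r _ => (hseed r.1 r.2).comap_le

theorem seedsBefore_mono (seed : ℕ → ι → Ω → S) : Monotone (seedsBefore seed) :=
  fun _ _ hst => biSup_mono fun _ hr => lt_of_lt_of_le hr hst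

theorem measurable_seed_seedsBefore_succ (seed : ℕ → ι → Ω → S) (t : ℕ) (i : ι) :
    Measurable[seedsBefore seed (t + 1)] (seed t i) :=
  Measurable.of_comap_le <| le_biSup (fun r : ℕ × ι => mS.comap (seed r.1 r.2))
    (show (t, i) ∈ {r : ℕ × ι | r.1 < t + 1} from Nat.lt_succ_self t)

theorem indepFun_seed_of_measurable_seedsBefore [MeasurableSpace Ω] {E : Type*}
    [MeasurableSpace E] {μ : Measure Ω} {seed : ℕ → ι → Ω → S}
    (hseed : ∀ t i, Measurable (seed t i))
    (hindep : iIndepFun (fun r : ℕ × ι => seed r.1 r.2) μ) {t : ℕ} {V : Ω → E}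
    (hV : Measurable[seedsBefore seed t] V) (i : ι) : IndepFun V (seed t i) μ := by
  have hdisj : Disjoint {r : ℕ × ι | r.1 < t} {(t, i)} := by simp
  have h := indep_iSup_of_disjoint (fun r : ℕ × ι => (hseed r.1 r.2).comap_le) hindep.iIndep hdisj
  simp only [iSup_singleton] at h
  exact indep_of_indep_of_le_left h hV.comap_le

end SeedFiltration

section Compression

variable {F β γ : Type*} [NormedAddCommGroup F]

def compressWithResidual (Q : F → β → F) (C : F → γ → F) (r : F) (w : β × γ) : F :=
  Q r w.1 + C (r - Q r w.1) w.2

-- With seeds `(ω₁, ω₂, ω₃)`: `Δ = Q p ω₁`, `ẽ⁺ = Q (p - Δ) ω₂`, `q⁺ = C (p - Δ - ẽ⁺) ω₃`,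
-- and the value is `ẽ⁺ + q⁺`.
def iconefNextError (Q : F → β → F) (C : F → γ → F) (p : F) (w : β × β × γ) : F :=
  compressWithResidual Q C (p - Q p w.1) w.2

variable [MeasurableSpace F] [BorelSpace F] [SecondCountableTopology F]
  [MeasurableSpace β] [MeasurableSpace γ] {Q : F → β → F} {C : F → γ → F}

theorem measurable_compressWithResidual (hQ : Measurable (Function.uncurry Q))
    (hC : Measurable (Function.uncurry C)) :
    Measurable (Function.uncurry (compressWithResidual Q C)) := by
  have he : Measurable fun z : F × β × γ => Q z.1 z.2.1 :=
    hQ.comp (measurable_fst.prodMk measurable_snd.fst)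
  exact he.add (hC.comp ((measurable_fst.sub he).prodMk measurable_snd.snd))

theorem measurable_iconefNextError (hQ : Measurable (Function.uncurry Q))
    (hC : Measurable (Function.uncurry C)) :
    Measurable (Function.uncurry (iconefNextError Q C)) :=
  (measurable_compressWithResidual hQ hC).comp <|
    (measurable_fst.sub (hQ.comp (measurable_fst.prodMk measurable_snd.fst))).prodMk
      measurable_snd.snd

variable {νQ : Measure β} {νC : Measure γ} [IsProbabilityMeasure νQ] [IsProbabilityMeasure νC]
  {sδ sθ : ℝ≥0∞}

theorem lintegral_enorm_compressWithResidual_sq_le (hQ : Measurable (Function.uncurry Q))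
    (hC : Measurable (Function.uncurry C))
    (hQvar : ∀ a, ∫⁻ ω, ‖Q a ω - a‖ₑ ^ 2 ∂νQ ≤ (sδ * ‖a‖ₑ) ^ 2) (hsδ : sδ ≤ 1)
    (hCvar : ∀ a, ∫⁻ ω, ‖C a ω - a‖ₑ ^ 2 ∂νC ≤ (sθ * ‖a‖ₑ) ^ 2) (r : F) :
    ∫⁻ w, ‖compressWithResidual Q C r w‖ₑ ^ 2 ∂(νQ.prod νC) ≤ ((1 + sθ) * ‖r‖ₑ) ^ 2 := by
  have hdev : Measurable fun ω => ‖Q r ω - r‖ₑ :=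
    ((hQ.comp measurable_prodMk_left).sub measurable_const).enorm
  have hinner : ∀ ω, ∫⁻ ω', ‖compressWithResidual Q C r (ω, ω')‖ₑ ^ 2 ∂νC
      ≤ (‖r‖ₑ + sθ * ‖Q r ω - r‖ₑ) ^ 2 := fun ω => by
    have htri : ∀ ω', ‖compressWithResidual Q C r (ω, ω')‖ₑ
        ≤ ‖r‖ₑ + ‖C (r - Q r ω) ω' - (r - Q r ω)‖ₑ := fun ω' => by
      rw [compressWithResidual, show Q r ω + C (r - Q r ω) ω'
        = r + (C (r - Q r ω) ω' - (r - Q r ω)) by abel]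
      exact enorm_add_le _ _
    calc ∫⁻ ω', ‖compressWithResidual Q C r (ω, ω')‖ₑ ^ 2 ∂νC
        ≤ ∫⁻ ω', (‖r‖ₑ + ‖C (r - Q r ω) ω' - (r - Q r ω)‖ₑ) ^ 2 ∂νC :=
          lintegral_mono fun ω' => by gcongr; exact htri ω'
      _ ≤ (‖r‖ₑ + sθ * ‖Q r ω - r‖ₑ) ^ 2 := by
          refine lintegral_const_add_sq_le ?_ _ ?_
          · exact ((hC.comp measurable_prodMk_left).sub measurable_const).enorm.aemeasurable
          · rw [enorm_sub_rev (Q r ω)]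
            exact hCvar (r - Q r ω)
  calc ∫⁻ w, ‖compressWithResidual Q C r w‖ₑ ^ 2 ∂(νQ.prod νC)
      = ∫⁻ ω, ∫⁻ ω', ‖compressWithResidual Q C r (ω, ω')‖ₑ ^ 2 ∂νC ∂νQ :=
        lintegral_prod _ (((measurable_compressWithResidual hQ hC).comp
          measurable_prodMk_left).enorm.pow_const 2).aemeasurable
    _ ≤ ∫⁻ ω, (‖r‖ₑ + sθ * ‖Q r ω - r‖ₑ) ^ 2 ∂νQ := lintegral_mono hinner
    _ ≤ (‖r‖ₑ + sθ * (sδ * ‖r‖ₑ)) ^ 2 := by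
        refine lintegral_const_add_sq_le (hdev.const_mul _).aemeasurable _ ?_
        simp_rw [mul_pow]
        rw [lintegral_const_mul _ (hdev.pow_const 2)]
        gcongr
        simpa [mul_pow] using hQvar r
    _ ≤ ((1 + sθ) * ‖r‖ₑ) ^ 2 := by
        gcongr
        calc ‖r‖ₑ + sθ * (sδ * ‖r‖ₑ) ≤ ‖r‖ₑ + sθ * (1 * ‖r‖ₑ) := by gcongr
          _ = (1 + sθ) * ‖r‖ₑ := by ring

theorem lintegral_enorm_iconefNextError_sq_le (hQ : Measurable (Function.uncurry Q))
    (hC : Measurable (Function.uncurry C))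
    (hQvar : ∀ a, ∫⁻ ω, ‖Q a ω - a‖ₑ ^ 2 ∂νQ ≤ (sδ * ‖a‖ₑ) ^ 2) (hsδ : sδ ≤ 1)
    (hCvar : ∀ a, ∫⁻ ω, ‖C a ω - a‖ₑ ^ 2 ∂νC ≤ (sθ * ‖a‖ₑ) ^ 2) (p : F) :
    ∫⁻ w, ‖iconefNextError Q C p w‖ₑ ^ 2 ∂(νQ.prod (νQ.prod νC))
      ≤ ((1 + sθ) * sδ * ‖p‖ₑ) ^ 2 := by
  have hQp : Measurable fun ω => ‖Q p ω - p‖ₑ ^ 2 :=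
    ((hQ.comp measurable_prodMk_left).sub measurable_const).enorm.pow_const 2
  calc ∫⁻ w, ‖iconefNextError Q C p w‖ₑ ^ 2 ∂(νQ.prod (νQ.prod νC))
      = ∫⁻ ω, ∫⁻ w, ‖compressWithResidual Q C (p - Q p ω) w‖ₑ ^ 2 ∂(νQ.prod νC) ∂νQ :=
        lintegral_prod _ (((measurable_iconefNextError hQ hC).comp
          measurable_prodMk_left).enorm.pow_const 2).aemeasurable
    _ ≤ ∫⁻ ω, (1 + sθ) ^ 2 * ‖Q p ω - p‖ₑ ^ 2 ∂νQ := lintegral_mono fun ω => by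
        rw [← mul_pow, enorm_sub_rev]
        exact lintegral_enorm_compressWithResidual_sq_le hQ hC hQvar hsδ hCvar _
    _ ≤ ((1 + sθ) * sδ * ‖p‖ₑ) ^ 2 := by
        rw [lintegral_const_mul _ hQp, mul_assoc, mul_pow (1 + sθ)]
        gcongr
        exact hQvar p

theorem lintegral_enorm_iconefNextError_smul_add_sq_le {Ωg : Type*} [MeasurableSpace Ωg]
    [InnerProductSpace ℝ F] [CompleteSpace F] {νg : Measure Ωg} [IsProbabilityMeasure νg]
    (hQ : Measurable (Function.uncurry Q)) (hC : Measurable (Function.uncurry C))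
    (hQvar : ∀ a, ∫⁻ ω, ‖Q a ω - a‖ₑ ^ 2 ∂νQ ≤ (sδ * ‖a‖ₑ) ^ 2) (hsδ : sδ ≤ 1)
    (hCvar : ∀ a, ∫⁻ ω, ‖C a ω - a‖ₑ ^ 2 ∂νC ≤ (sθ * ‖a‖ₑ) ^ 2) {G : Ωg → F} (hG : Measurable G)
    {m : F} (hm : ∫ ω, G ω ∂νg = m) {v : ℝ≥0∞} (hv : v ≠ ∞)
    (hvar : ∫⁻ ω, ‖G ω - m‖ₑ ^ 2 ∂νg ≤ v) (η : ℝ) (e : F) {lam : ℝ} (hlam : 0 < lam) :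
    ∫⁻ w, ‖iconefNextError Q C (η • G w.1 + e) w.2‖ₑ ^ 2 ∂(νg.prod (νQ.prod (νQ.prod νC)))
      ≤ ((1 + sθ) * sδ) ^ 2 * (ENNReal.ofReal ((1 + lam⁻¹) * η ^ 2) * (v + ‖m‖ₑ ^ 2)
        + ENNReal.ofReal (1 + lam) * ‖e‖ₑ ^ 2) := by
  have hp : Measurable fun ω => η • G ω + e := (hG.const_smul η).add measurable_const
  calc ∫⁻ w, ‖iconefNextError Q C (η • G w.1 + e) w.2‖ₑ ^ 2 ∂(νg.prod (νQ.prod (νQ.prod νC)))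
      = ∫⁻ ω, ∫⁻ w, ‖iconefNextError Q C (η • G ω + e) w‖ₑ ^ 2 ∂(νQ.prod (νQ.prod νC)) ∂νg :=
        lintegral_prod _ (((measurable_iconefNextError hQ hC).comp
          ((hp.comp measurable_fst).prodMk measurable_snd)).enorm.pow_const 2).aemeasurable
    _ ≤ ∫⁻ ω, ((1 + sθ) * sδ) ^ 2 * ‖η • G ω + e‖ₑ ^ 2 ∂νg := lintegral_mono fun ω => by
        rw [← mul_pow]
        exact lintegral_enorm_iconefNextError_sq_le hQ hC hQvar hsδ hCvar _
    _ ≤ _ := by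
        rw [lintegral_const_mul _ (hp.enorm.pow_const 2)]
        gcongr
        exact lintegral_enorm_smul_add_sq_le hG.aestronglyMeasurable hm hv hvar η e hlam

end Compression

section OneStep

variable {F Ωg ΩQ ΩC : Type*} [NormedAddCommGroup F] [InnerProductSpace ℝ F] [CompleteSpace F]
  [MeasurableSpace F] [BorelSpace F] [SecondCountableTopology F]
  [MeasurableSpace Ωg] [MeasurableSpace ΩQ] [MeasurableSpace ΩC]
  {νg : Measure Ωg} {νQ : Measure ΩQ} {νC : Measure ΩC}
  [IsProbabilityMeasure νg] [IsProbabilityMeasure νQ] [IsProbabilityMeasure νC]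
  {Q : F → ΩQ → F} {C : F → ΩC → F} {σ δ θ c lam : ℝ}

theorem lintegral_enorm_iconefNextError_smul_add_sq_le_of_delta_eq
    (hQ : Measurable (Function.uncurry Q)) (hC : Measurable (Function.uncurry C))
    (hQvar : ∀ a, ∫⁻ ω, ‖Q a ω - a‖ₑ ^ 2 ∂νQ ≤ ENNReal.ofReal (δ * ‖a‖ ^ 2))
    (hCvar : ∀ a, ∫⁻ ω, ‖C a ω - a‖ₑ ^ 2 ∂νC ≤ ENNReal.ofReal (θ * ‖a‖ ^ 2))
    (hθ : 0 ≤ θ) (hc : 0 ≤ c) (hδ1 : δ ≤ 1) (hlam : 0 < lam)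
    (hδeq : δ = c / ((1 + lam) * (1 + √θ) ^ 2)) {g : Ωg → F} (hg : Measurable g) {m : F}
    (hm : ∫ ω, g ω ∂νg = m) (hvar : ∫⁻ ω, ‖g ω - m‖ₑ ^ 2 ∂νg ≤ ENNReal.ofReal (σ ^ 2))
    (η : ℝ) (e : F) :
    ∫⁻ w, ‖iconefNextError Q C (η • g w.1 + e) w.2‖ₑ ^ 2 ∂(νg.prod (νQ.prod (νQ.prod νC)))
      ≤ ENNReal.ofReal c * ‖e‖ₑ ^ 2
        + ENNReal.ofReal (c / lam * η ^ 2) * (ENNReal.ofReal (σ ^ 2) + ‖m‖ₑ ^ 2) := by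
  have hδ0 : 0 ≤ δ := hδeq ▸ by positivity
  have hK : ((1 + ENNReal.ofReal √θ) * ENNReal.ofReal √δ) ^ 2
      = ENNReal.ofReal (c / (1 + lam)) := by
    rw [← ENNReal.ofReal_one, ← ENNReal.ofReal_add zero_le_one (Real.sqrt_nonneg _),
      ← ENNReal.ofReal_mul (by positivity), ← ENNReal.ofReal_pow (by positivity), mul_pow,
      Real.sq_sqrt hδ0, hδeq]
    congr 1
    field_simp
  have hc' : c / (1 + lam) * (1 + lam) = c := by field_simp
  have hcη : c / (1 + lam) * ((1 + lam⁻¹) * η ^ 2) = c / lam * η ^ 2 := by field_simp; ring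
  refine (lintegral_enorm_iconefNextError_smul_add_sq_le hQ hC
    (fun b => (hQvar b).trans_eq (ofReal_mul_norm_sq hδ0 b))
    (ENNReal.ofReal_le_one.2 (Real.sqrt_le_one.2 hδ1))
    (fun b => (hCvar b).trans_eq (ofReal_mul_norm_sq hθ b)) hg hm ENNReal.ofReal_ne_top hvar
    η e hlam).trans_eq ?_
  rw [hK, mul_add, ← mul_assoc, ← mul_assoc, ← ENNReal.ofReal_mul (by positivity),
    ← ENNReal.ofReal_mul (by positivity), hc', hcη, add_comm]

theorem lintegral_enorm_iconefNextError_sq_le_of_indepFun {Ω : Type*} [MeasurableSpace Ω]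
    {μ : Measure Ω} [IsProbabilityMeasure μ] {g : F → Ωg → F}
    (hg : Measurable (Function.uncurry g)) (hQ : Measurable (Function.uncurry Q))
    (hC : Measurable (Function.uncurry C)) {grad : F → F}
    (hgmean : ∀ a, ∫ ω, g a ω ∂νg = grad a)
    (hgvar : ∀ a, ∫⁻ ω, ‖g a ω - grad a‖ₑ ^ 2 ∂νg ≤ ENNReal.ofReal (σ ^ 2))
    (hQvar : ∀ a, ∫⁻ ω, ‖Q a ω - a‖ₑ ^ 2 ∂νQ ≤ ENNReal.ofReal (δ * ‖a‖ ^ 2))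
    (hCvar : ∀ a, ∫⁻ ω, ‖C a ω - a‖ₑ ^ 2 ∂νC ≤ ENNReal.ofReal (θ * ‖a‖ ^ 2))
    (hθ : 0 ≤ θ) (hc : 0 ≤ c) (hδ1 : δ ≤ 1) (hlam : 0 < lam)
    (hδeq : δ = c / ((1 + lam) * (1 + √θ) ^ 2))
    {X e : Ω → F} {W : Ω → Ωg × ΩQ × ΩQ × ΩC} (hX : Measurable X) (he : Measurable e)
    (hW : Measurable W) (hindep : IndepFun (fun ω => (X ω, e ω)) W μ)
    (hlaw : μ.map W = νg.prod (νQ.prod (νQ.prod νC))) {G : ℝ}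
    (hgrad : ∫⁻ ω, ‖grad (X ω)‖ₑ ^ 2 ∂μ ≤ ENNReal.ofReal (G ^ 2)) (η : ℝ) :
    ∫⁻ ω, ‖iconefNextError Q C (η • g (X ω) (W ω).1 + e ω) (W ω).2‖ₑ ^ 2 ∂μ
      ≤ ENNReal.ofReal c * ∫⁻ ω, ‖e ω‖ₑ ^ 2 ∂μ
        + ENNReal.ofReal (c / lam * η ^ 2 * (σ ^ 2 + G ^ 2)) := by
  set Φ : (F × F) × (Ωg × ΩQ × ΩQ × ΩC) → ℝ≥0∞ :=
    fun z => ‖iconefNextError Q C (η • g z.1.1 z.2.1 + z.1.2) z.2.2‖ₑ ^ 2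
  have hΦ : Measurable Φ := ((measurable_iconefNextError hQ hC).comp
    (((hg.comp (measurable_fst.fst.prodMk measurable_snd.fst)).const_smul η).add
      measurable_fst.snd |>.prodMk measurable_snd.snd)).enorm.pow_const 2
  have he2 : Measurable fun ω => ‖e ω‖ₑ ^ 2 := he.enorm.pow_const 2
  calc ∫⁻ ω, ‖iconefNextError Q C (η • g (X ω) (W ω).1 + e ω) (W ω).2‖ₑ ^ 2 ∂μ
      = ∫⁻ ω, ∫⁻ w, Φ ((X ω, e ω), w) ∂(μ.map W) ∂μ :=
        lintegral_comp_eq_lintegral_lintegral_map_of_indepFun (hX.prodMk he) hW hindep hΦ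
    _ ≤ ∫⁻ ω, (ENNReal.ofReal c * ‖e ω‖ₑ ^ 2 + ENNReal.ofReal (c / lam * η ^ 2)
          * (ENNReal.ofReal (σ ^ 2) + ‖grad (X ω)‖ₑ ^ 2)) ∂μ := lintegral_mono fun ω => by
        rw [hlaw]
        exact lintegral_enorm_iconefNextError_smul_add_sq_le_of_delta_eq hQ hC hQvar hCvar hθ hc
          hδ1 hlam hδeq (hg.comp measurable_prodMk_left) (hgmean _) (hgvar _) η _
    _ = ENNReal.ofReal c * ∫⁻ ω, ‖e ω‖ₑ ^ 2 ∂μ + ENNReal.ofReal (c / lam * η ^ 2)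
          * (ENNReal.ofReal (σ ^ 2) + ∫⁻ ω, ‖grad (X ω)‖ₑ ^ 2 ∂μ) := by
        rw [lintegral_add_left (he2.const_mul _), lintegral_const_mul _ he2,
          lintegral_const_mul' _ _ ENNReal.ofReal_ne_top, lintegral_add_left measurable_const,
          lintegral_const, measure_univ, mul_one]
    _ ≤ _ := by
        rw [ENNReal.ofReal_mul (p := c / lam * η ^ 2) (by positivity),
          ENNReal.ofReal_add (sq_nonneg _) (sq_nonneg _)]
        gcongr

end OneStep

theorem iconef_measurable_seedsBefore {Ω F Ωg ΩQ ΩC : Type*} [NormedAddCommGroup F]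
    [NormedSpace ℝ F] [MeasurableSpace F] [BorelSpace F] [SecondCountableTopology F]
    [MeasurableSpace Ωg] [MeasurableSpace ΩQ] [MeasurableSpace ΩC] {N : ℕ} {η : ℝ}
    {G' : ℕ → Fin N → F → Ωg → F} {Q : F → ΩQ → F} {C : F → ΩC → F}
    (hGmeas : ∀ t i, Measurable (Function.uncurry (G' t i)))
    (hQmeas : Measurable (Function.uncurry Q)) (hCmeas : Measurable (Function.uncurry C))
    {seed : ℕ → Fin N → Ω → Ωg × ΩQ × ΩQ × ΩC} {x0 : F} {x : ℕ → Ω → F}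
    {et q g p Δ : ℕ → Fin N → Ω → F}
    (hx0 : ∀ ω, x 0 ω = x0) (het0 : ∀ i ω, et 0 i ω = 0) (hq0 : ∀ i ω, q 0 i ω = 0)
    (hg : ∀ t i ω, g t i ω = G' t i (x t ω) (seed t i ω).1)
    (hp : ∀ t i ω, p t i ω = η • g t i ω + et t i ω + q t i ω)
    (hΔ : ∀ t i ω, Δ t i ω = Q (p t i ω) (seed t i ω).2.1)
    (hx : ∀ t ω, x (t + 1) ω = x t ω - (N : ℝ)⁻¹ • ∑ i, Δ t i ω)
    (het : ∀ t i ω, et (t + 1) i ω = Q (p t i ω - Δ t i ω) (seed t i ω).2.2.1)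
    (hq : ∀ t i ω,
      q (t + 1) i ω = C (p t i ω - Δ t i ω - et (t + 1) i ω) (seed t i ω).2.2.2) (t : ℕ) :
    Measurable[seedsBefore seed t] (x t) ∧
      ∀ i, Measurable[seedsBefore seed t] (et t i) ∧ Measurable[seedsBefore seed t] (q t i) := by
  induction t with
  | zero =>
    refine ⟨?_, fun i => ⟨?_, ?_⟩⟩
    · rw [funext hx0]; exact measurable_const
    · rw [funext (het0 i)]; exact measurable_const
    · rw [funext (hq0 i)]; exact measurable_const
  | succ t ih =>
    obtain ⟨hxt, hetq⟩ := ih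
    have hle := seedsBefore_mono seed (Nat.le_succ t)
    have hW := measurable_seed_seedsBefore_succ seed t
    have hx' : Measurable[seedsBefore seed (t + 1)] (x t) := hxt.mono hle le_rfl
    have hp' : ∀ i, Measurable[seedsBefore seed (t + 1)] (p t i) := fun i => by
      rw [funext (hp t i)]
      simp_rw [hg]
      exact (((hGmeas t i).comp (hx'.prodMk (hW i).fst)).const_smul η).add
        ((hetq i).1.mono hle le_rfl) |>.add ((hetq i).2.mono hle le_rfl)
    have hΔ' : ∀ i, Measurable[seedsBefore seed (t + 1)] (Δ t i) := fun i => by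
      rw [funext (hΔ t i)]
      exact hQmeas.comp ((hp' i).prodMk (hW i).snd.fst)
    have het' : ∀ i, Measurable[seedsBefore seed (t + 1)] (et (t + 1) i) := fun i => by
      rw [funext (het t i)]
      exact hQmeas.comp (((hp' i).sub (hΔ' i)).prodMk (hW i).snd.snd.fst)
    refine ⟨?_, fun i => ⟨het' i, ?_⟩⟩
    · rw [funext (hx t)]
      exact hx'.sub ((Finset.measurable_sum _ fun i _ => hΔ' i).const_smul _)
    · rw [funext (hq t i)]
      exact hCmeas.comp ((((hp' i).sub (hΔ' i)).sub (het' i)).prodMk (hW i).snd.snd.snd)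

theorem iconef_v2_error_energy_bound_general
    (d N : ℕ)
    (σ G δ θ c lam η : ℝ)
    (hθ : 0 ≤ θ)
    (hδ1 : δ < 1) (hc : c ∈ Set.Ioo (0 : ℝ) 1) (hlam : 0 < lam)
    (hδeq : δ = c / ((1 + lam) * (1 + Real.sqrt θ) ^ 2))
    (f : EuclideanSpace ℝ (Fin d) → ℝ)
    -- seed spaces for the stochastic gradients and the compressor calls
    {Ωg ΩQ ΩC : Type} [MeasurableSpace Ωg] [MeasurableSpace ΩQ] [MeasurableSpace ΩC]
    (νg : Measure Ωg) (νQ : Measure ΩQ) (νC : Measure ΩC)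
    [IsProbabilityMeasure νg] [IsProbabilityMeasure νQ] [IsProbabilityMeasure νC]
    (G' : ℕ → Fin N → EuclideanSpace ℝ (Fin d) → Ωg → EuclideanSpace ℝ (Fin d))
    (Q : EuclideanSpace ℝ (Fin d) → ΩQ → EuclideanSpace ℝ (Fin d))
    (C : EuclideanSpace ℝ (Fin d) → ΩC → EuclideanSpace ℝ (Fin d))
    (hGmeas : ∀ t i, Measurable (Function.uncurry (G' t i)))
    (hQmeas : Measurable (Function.uncurry Q))
    (hCmeas : Measurable (Function.uncurry C))
    -- Assumption 2: unbiased stochastic gradients with bounded variance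
    (hGmean : ∀ t i a, ∫ ω, G' t i a ω ∂νg = gradient f a)
    (hGvar : ∀ t i a,
      ∫⁻ ω, (‖G' t i a ω - gradient f a‖₊ : ℝ≥0∞) ^ 2 ∂νg ≤ ENNReal.ofReal (σ ^ 2))
    -- Assumption 4: contractive gradient compressor
    (hQvar : ∀ a, ∫⁻ ω, (‖Q a ω - a‖₊ : ℝ≥0∞) ^ 2 ∂νQ ≤ ENNReal.ofReal (δ * ‖a‖ ^ 2))
    -- Assumption 3: unbiased error compressor
    (hCvar : ∀ a, ∫⁻ ω, (‖C a ω - a‖₊ : ℝ≥0∞) ^ 2 ∂νC ≤ ENNReal.ofReal (θ * ‖a‖ ^ 2))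
    -- the underlying sample space carrying i.i.d. fresh seeds for every (t, i):
    -- one gradient seed and two Q seeds plus one C seed per step
    {Ω : Type} [MeasurableSpace Ω] (μ : Measure Ω) [IsProbabilityMeasure μ]
    (seed : ℕ → Fin N → Ω → Ωg × ΩQ × ΩQ × ΩC)
    (hseedMeas : ∀ t i, Measurable (seed t i))
    (hseedLaw : ∀ t i, Measure.map (seed t i) μ = νg.prod (νQ.prod (νQ.prod νC)))
    (hseedIndep : iIndepFun
      (fun q : ℕ × Fin N => seed q.1 q.2) μ)
    -- the iConEF-v2 trajectories
    (x0 : EuclideanSpace ℝ (Fin d))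
    (x : ℕ → Ω → EuclideanSpace ℝ (Fin d))
    (et q g p Δ : ℕ → Fin N → Ω → EuclideanSpace ℝ (Fin d))
    (hx0 : ∀ ω, x 0 ω = x0)
    (het0 : ∀ i ω, et 0 i ω = 0)
    (hq0 : ∀ i ω, q 0 i ω = 0)
    (hg : ∀ t i ω, g t i ω = G' t i (x t ω) (seed t i ω).1)
    (hp : ∀ t i ω, p t i ω = η • g t i ω + et t i ω + q t i ω)
    (hΔ : ∀ t i ω, Δ t i ω = Q (p t i ω) (seed t i ω).2.1)
    (hx : ∀ t ω, x (t + 1) ω = x t ω - (N : ℝ)⁻¹ • ∑ i, Δ t i ω)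
    (het : ∀ t i ω, et (t + 1) i ω = Q (p t i ω - Δ t i ω) (seed t i ω).2.2.1)
    (hq : ∀ t i ω,
      q (t + 1) i ω = C (p t i ω - Δ t i ω - et (t + 1) i ω) (seed t i ω).2.2.2)
    -- Assumption 2: bounded expected squared gradient norm
    (hgradbound : ∀ t,
      ∫⁻ ω, (‖gradient f (x t ω)‖₊ : ℝ≥0∞) ^ 2 ∂μ ≤ ENNReal.ofReal (G ^ 2)) :
    ∀ t : ℕ,
      ∫⁻ ω, (‖(N : ℝ)⁻¹ • ∑ i, (et (t + 1) i ω + q (t + 1) i ω)‖₊ : ℝ≥0∞) ^ 2 ∂μ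
        ≤ ENNReal.ofReal ((c / ((1 - c) * lam)) * η ^ 2 * (σ ^ 2 + G ^ 2)) := by
  obtain ⟨hc0, hc1⟩ := hc
  have hstate := iconef_measurable_seedsBefore hGmeas hQmeas hCmeas hx0 het0 hq0 hg hp hΔ hx het hq
  have hpast := seedsBefore_le hseedMeas
  have he : ∀ t i, Measurable[seedsBefore seed t] fun ω => et t i ω + q t i ω := fun t i =>
    ((hstate t).2 i).1.add ((hstate t).2 i).2
  have hstep : ∀ t i, ∫⁻ ω, ‖et (t + 1) i ω + q (t + 1) i ω‖ₑ ^ 2 ∂μ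
      ≤ ENNReal.ofReal c * ∫⁻ ω, ‖et t i ω + q t i ω‖ₑ ^ 2 ∂μ
        + ENNReal.ofReal (c / lam * η ^ 2 * (σ ^ 2 + G ^ 2)) := fun t i => by
    have hnext : ∀ ω, et (t + 1) i ω + q (t + 1) i ω = iconefNextError Q C
        (η • G' t i (x t ω) (seed t i ω).1 + (et t i ω + q t i ω)) (seed t i ω).2 := fun ω => by
      simp only [hq, het, hΔ, hp, hg, iconefNextError, compressWithResidual, add_assoc]
    simp_rw [hnext]
    exact lintegral_enorm_iconefNextError_sq_le_of_indepFun (hGmeas t i) hQmeas hCmeas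
      (hGmean t i) (hGvar t i) hQvar hCvar hθ hc0.le hδ1.le hlam hδeq
      ((hstate t).1.mono (hpast t) le_rfl) ((he t i).mono (hpast t) le_rfl) (hseedMeas t i)
      (indepFun_seed_of_measurable_seedsBefore hseedMeas hseedIndep
        ((hstate t).1.prodMk (he t i)) i) (hseedLaw t i) (hgradbound t) η
  intro t
  calc _ ≤ ENNReal.ofReal (c / lam * η ^ 2 * (σ ^ 2 + G ^ 2) / (1 - c)) :=
        lintegral_enorm_average_sq_le (fun i => ((he (t + 1) i).mono (hpast _) le_rfl).aemeasurable)
          fun i => le_ofReal_div_one_sub_of_le_mul_add hc0.le hc1 (by positivity)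
            (by simp [het0, hq0]) (fun t => hstep t i) (t + 1)
    _ = _ := by
        congr 1
        field_simp

/-- **iConEF-v2 error-energy bound (Lemma 5).**
Under iConEF-v2 (`p t i = η • g t i + ẽ t i + q t i`, `Δ t i = Q (p t i)`,
`x (t+1) = x t - (1/N) • ∑ i, Δ t i`, `ẽ (t+1) i = Q (p t i - Δ t i)`,
`q (t+1) i = C (p t i - Δ t i - ẽ (t+1) i)`, `ẽ 0 i = q 0 i = 0`), with unbiased
stochastic gradients of variance `≤ σ²` and `E[‖∇f(x t)‖²] ≤ G²`, an unbiased error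
compressor `C` with `E[‖C a - a‖²|a] ≤ θ‖a‖²`, and a gradient compressor `Q` with
`E[‖Q a - a‖²|a] ≤ δ‖a‖²` where `δ = c/((1+λ)(1+√θ)²)` for some `c ∈ (0,1)`, `λ > 0`:
writing `e (t+1) i = ẽ (t+1) i + q (t+1) i`, for every `t ≥ 0`,
`E[‖(1/N) ∑ i, e (t+1) i‖²] ≤ (c/((1-c)λ)) η² (σ² + G²)`. -/
theorem iconef_v2_error_energy_bound
    (d N : ℕ) (hN : 0 < N)
    (σ G δ θ c lam η : ℝ)
    (hσ : 0 ≤ σ) (hG : 0 ≤ G) (hθ : 0 ≤ θ)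
    (hδ0 : 0 < δ) (hδ1 : δ < 1) (hc : c ∈ Set.Ioo (0 : ℝ) 1) (hlam : 0 < lam)
    (hδeq : δ = c / ((1 + lam) * (1 + Real.sqrt θ) ^ 2))
    (hη : 0 < η)
    (f : EuclideanSpace ℝ (Fin d) → ℝ) (hf : Differentiable ℝ f)
    -- seed spaces for the stochastic gradients and the compressor calls
    {Ωg ΩQ ΩC : Type} [MeasurableSpace Ωg] [MeasurableSpace ΩQ] [MeasurableSpace ΩC]
    (νg : Measure Ωg) (νQ : Measure ΩQ) (νC : Measure ΩC)
    [IsProbabilityMeasure νg] [IsProbabilityMeasure νQ] [IsProbabilityMeasure νC]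
    (G' : ℕ → Fin N → EuclideanSpace ℝ (Fin d) → Ωg → EuclideanSpace ℝ (Fin d))
    (Q : EuclideanSpace ℝ (Fin d) → ΩQ → EuclideanSpace ℝ (Fin d))
    (C : EuclideanSpace ℝ (Fin d) → ΩC → EuclideanSpace ℝ (Fin d))
    (hGmeas : ∀ t i, Measurable (Function.uncurry (G' t i)))
    (hQmeas : Measurable (Function.uncurry Q))
    (hCmeas : Measurable (Function.uncurry C))
    -- Assumption 2: unbiased stochastic gradients with bounded variance
    (hGmean : ∀ t i a, ∫ ω, G' t i a ω ∂νg = gradient f a)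
    (hGvar : ∀ t i a,
      ∫⁻ ω, (‖G' t i a ω - gradient f a‖₊ : ℝ≥0∞) ^ 2 ∂νg ≤ ENNReal.ofReal (σ ^ 2))
    -- Assumption 4: contractive gradient compressor
    (hQvar : ∀ a, ∫⁻ ω, (‖Q a ω - a‖₊ : ℝ≥0∞) ^ 2 ∂νQ ≤ ENNReal.ofReal (δ * ‖a‖ ^ 2))
    -- Assumption 3: unbiased error compressor
    (hCmean : ∀ a, ∫ ω, C a ω ∂νC = a)
    (hCvar : ∀ a, ∫⁻ ω, (‖C a ω - a‖₊ : ℝ≥0∞) ^ 2 ∂νC ≤ ENNReal.ofReal (θ * ‖a‖ ^ 2))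
    -- the underlying sample space carrying i.i.d. fresh seeds for every (t, i):
    -- one gradient seed and two Q seeds plus one C seed per step
    {Ω : Type} [MeasurableSpace Ω] (μ : Measure Ω) [IsProbabilityMeasure μ]
    (seed : ℕ → Fin N → Ω → Ωg × ΩQ × ΩQ × ΩC)
    (hseedMeas : ∀ t i, Measurable (seed t i))
    (hseedLaw : ∀ t i, Measure.map (seed t i) μ = νg.prod (νQ.prod (νQ.prod νC)))
    (hseedIndep : iIndepFun
      (fun q : ℕ × Fin N => seed q.1 q.2) μ)
    -- the iConEF-v2 trajectories
    (x0 : EuclideanSpace ℝ (Fin d))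
    (x : ℕ → Ω → EuclideanSpace ℝ (Fin d))
    (et q g p Δ : ℕ → Fin N → Ω → EuclideanSpace ℝ (Fin d))
    (hx0 : ∀ ω, x 0 ω = x0)
    (het0 : ∀ i ω, et 0 i ω = 0)
    (hq0 : ∀ i ω, q 0 i ω = 0)
    (hg : ∀ t i ω, g t i ω = G' t i (x t ω) (seed t i ω).1)
    (hp : ∀ t i ω, p t i ω = η • g t i ω + et t i ω + q t i ω)
    (hΔ : ∀ t i ω, Δ t i ω = Q (p t i ω) (seed t i ω).2.1)
    (hx : ∀ t ω, x (t + 1) ω = x t ω - (N : ℝ)⁻¹ • ∑ i, Δ t i ω)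
    (het : ∀ t i ω, et (t + 1) i ω = Q (p t i ω - Δ t i ω) (seed t i ω).2.2.1)
    (hq : ∀ t i ω,
      q (t + 1) i ω = C (p t i ω - Δ t i ω - et (t + 1) i ω) (seed t i ω).2.2.2)
    -- Assumption 2: bounded expected squared gradient norm
    (hgradbound : ∀ t,
      ∫⁻ ω, (‖gradient f (x t ω)‖₊ : ℝ≥0∞) ^ 2 ∂μ ≤ ENNReal.ofReal (G ^ 2)) :
    ∀ t : ℕ,
      ∫⁻ ω, (‖(N : ℝ)⁻¹ • ∑ i, (et (t + 1) i ω + q (t + 1) i ω)‖₊ : ℝ≥0∞) ^ 2 ∂μ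
        ≤ ENNReal.ofReal ((c / ((1 - c) * lam)) * η ^ 2 * (σ ^ 2 + G ^ 2)) :=
  iconef_v2_error_energy_bound_general d N σ G δ θ c lam η hθ hδ1 hc hlam hδeq f νg νQ νC G' Q C
    hGmeas hQmeas hCmeas hGmean hGvar hQvar hCvar μ seed hseedMeas hseedLaw hseedIndep x0 x et q g p
    Δ hx0 het0 hq0 hg hp hΔ hx het hq hgradbound
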